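/- arXiv:math/9807050 — 2 statements merged into one kernel-verified Lean document; each statement's English description precedes it below -/
import Mathlib

section
/- For integers n ≥ 3, 0 < j < n/2 and l ≥ 1, the multiplicity 2^⌊n/2⌋ · C(n+1, j+1) · C(l+n, l-1) · (n-2j)(j+1) / ((l+j)(l+n-j)) is a positive integer; that is, (l+j)(l+n-j) divides 2^⌊n/2⌋ · C(n+1, j+1) · C(l+n, l-1) · (n-2j)(j+1). -/
open Nat

private lemma keyA (a j d : ℕ) :
    (a + j + 1) * (Nat.choose (a + 2*j + d + 2) (j + d + 1) * Nat.choose (a + j) j)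
      = (j + 1) * (Nat.choose (2*j + d + 2) (j + 1) * Nat.choose (a + 2*j + d + 2) a) := by
  have e1 : Nat.choose (a + j) j * j ! * a ! = (a + j)! := by
    have h := Nat.choose_mul_factorial_mul_factorial (show j ≤ a + j by omega)
    simpa [show a + j - j = a by omega] using h
  have e2 : Nat.choose (a + 2*j + d + 2) (j + d + 1) * (j + d + 1)! * (a + j + 1)!
      = (a + 2*j + d + 2)! := by
    have h := Nat.choose_mul_factorial_mul_factorial
      (show j + d + 1 ≤ a + 2*j + d + 2 by omega)
    simpa [show a + 2*j + d + 2 - (j + d + 1) = a + j + 1 by omega] using h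
  have e3 : Nat.choose (2*j + d + 2) (j + 1) * (j + 1)! * (j + d + 1)! = (2*j + d + 2)! := by
    have h := Nat.choose_mul_factorial_mul_factorial (show j + 1 ≤ 2*j + d + 2 by omega)
    simpa [show 2*j + d + 2 - (j + 1) = j + d + 1 by omega] using h
  have e4 : Nat.choose (a + 2*j + d + 2) a * a ! * (2*j + d + 2)! = (a + 2*j + d + 2)! := by
    have h := Nat.choose_mul_factorial_mul_factorial (show a ≤ a + 2*j + d + 2 by omega)
    simpa [show a + 2*j + d + 2 - a = 2*j + d + 2 by omega] using h
  have e5 : (a + j + 1) * (a + j)! = (a + j + 1)! := (Nat.factorial_succ (a + j)).symm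
  have e6 : (j + 1) * j ! = (j + 1)! := (Nat.factorial_succ j).symm
  have hD : 0 < j ! * ((j + d + 1)! * a !) := by positivity
  apply Nat.eq_of_mul_eq_mul_right hD
  calc (a + j + 1) * (Nat.choose (a + 2*j + d + 2) (j + d + 1) * Nat.choose (a + j) j)
        * (j ! * ((j + d + 1)! * a !))
      = Nat.choose (a + 2*j + d + 2) (j + d + 1) * (j + d + 1)!
          * ((a + j + 1) * (Nat.choose (a + j) j * j ! * a !)) := by ring
    _ = Nat.choose (a + 2*j + d + 2) (j + d + 1) * (j + d + 1)! * ((a + j + 1) * (a + j)!) := by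
        rw [e1]
    _ = Nat.choose (a + 2*j + d + 2) (j + d + 1) * (j + d + 1)! * (a + j + 1)! := by rw [e5]
    _ = (a + 2*j + d + 2)! := e2
    _ = Nat.choose (a + 2*j + d + 2) a * a ! * (2*j + d + 2)! := e4.symm
    _ = Nat.choose (a + 2*j + d + 2) a * a !
          * (Nat.choose (2*j + d + 2) (j + 1) * (j + 1)! * (j + d + 1)!) := by rw [e3]
    _ = Nat.choose (a + 2*j + d + 2) a * a !
          * (Nat.choose (2*j + d + 2) (j + 1) * ((j + 1) * j !) * (j + d + 1)!) := by rw [e6]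
    _ = (j + 1) * (Nat.choose (2*j + d + 2) (j + 1) * Nat.choose (a + 2*j + d + 2) a)
        * (j ! * ((j + d + 1)! * a !)) := by ring

private lemma keyB (a j d : ℕ) :
    (a + j + d + 2) * (Nat.choose (a + 2*j + d + 2) j * Nat.choose (a + j + d + 1) (j + d + 1))
      = (j + 1) * (Nat.choose (2*j + d + 2) (j + 1) * Nat.choose (a + 2*j + d + 2) a) := by
  have e3 : Nat.choose (2*j + d + 2) (j + 1) * (j + 1)! * (j + d + 1)! = (2*j + d + 2)! := by
    have h := Nat.choose_mul_factorial_mul_factorial (show j + 1 ≤ 2*j + d + 2 by omega)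
    simpa [show 2*j + d + 2 - (j + 1) = j + d + 1 by omega] using h
  have e4 : Nat.choose (a + 2*j + d + 2) a * a ! * (2*j + d + 2)! = (a + 2*j + d + 2)! := by
    have h := Nat.choose_mul_factorial_mul_factorial (show a ≤ a + 2*j + d + 2 by omega)
    simpa [show a + 2*j + d + 2 - a = 2*j + d + 2 by omega] using h
  have e7 : Nat.choose (a + j + d + 1) (j + d + 1) * (j + d + 1)! * a ! = (a + j + d + 1)! := by
    have h := Nat.choose_mul_factorial_mul_factorial
      (show j + d + 1 ≤ a + j + d + 1 by omega)
    simpa [show a + j + d + 1 - (j + d + 1) = a by omega] using h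
  have e8 : (a + j + d + 2) * (a + j + d + 1)! = (a + j + d + 2)! :=
    (Nat.factorial_succ (a + j + d + 1)).symm
  have e9 : Nat.choose (a + 2*j + d + 2) j * j ! * (a + j + d + 2)! = (a + 2*j + d + 2)! := by
    have h := Nat.choose_mul_factorial_mul_factorial (show j ≤ a + 2*j + d + 2 by omega)
    simpa [show a + 2*j + d + 2 - j = a + j + d + 2 by omega] using h
  have e6 : (j + 1) * j ! = (j + 1)! := (Nat.factorial_succ j).symm
  have hD : 0 < j ! * ((j + d + 1)! * a !) := by positivity
  apply Nat.eq_of_mul_eq_mul_right hD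
  calc (a + j + d + 2)
        * (Nat.choose (a + 2*j + d + 2) j * Nat.choose (a + j + d + 1) (j + d + 1))
        * (j ! * ((j + d + 1)! * a !))
      = Nat.choose (a + 2*j + d + 2) j * j !
          * ((a + j + d + 2)
            * (Nat.choose (a + j + d + 1) (j + d + 1) * (j + d + 1)! * a !)) := by ring
    _ = Nat.choose (a + 2*j + d + 2) j * j ! * ((a + j + d + 2) * (a + j + d + 1)!) := by rw [e7]
    _ = Nat.choose (a + 2*j + d + 2) j * j ! * (a + j + d + 2)! := by rw [e8]
    _ = (a + 2*j + d + 2)! := e9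
    _ = Nat.choose (a + 2*j + d + 2) a * a ! * (2*j + d + 2)! := e4.symm
    _ = Nat.choose (a + 2*j + d + 2) a * a !
          * (Nat.choose (2*j + d + 2) (j + 1) * (j + 1)! * (j + d + 1)!) := by rw [e3]
    _ = Nat.choose (a + 2*j + d + 2) a * a !
          * (Nat.choose (2*j + d + 2) (j + 1) * ((j + 1) * j !) * (j + d + 1)!) := by rw [e6]
    _ = (j + 1) * (Nat.choose (2*j + d + 2) (j + 1) * Nat.choose (a + 2*j + d + 2) a)
        * (j ! * ((j + d + 1)! * a !)) := by ring

/-- The multiplicity `2^⌊n/2⌋ * C(n+1, j+1) * C(l+n, l-1) * (n-2j)(j+1) / ((l+j)(l+n-j))`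
of the eigenvalue `±(n/2 + l)` of the higher spin Dirac operator is a positive integer:
`(l+j)(l+n-j)` divides the numerator, with positive quotient. -/
theorem stmt_1 (n j l : ℕ) (hn : 3 ≤ n) (hj : 0 < j) (hjn : 2 * j < n) (hl : 1 ≤ l) :
    ∃ m : ℕ, 0 < m ∧
      2 ^ (n / 2) * Nat.choose (n + 1) (j + 1) * Nat.choose (l + n) (l - 1)
          * ((n - 2 * j) * (j + 1))
        = (l + j) * (l + n - j) * m := by
  obtain ⟨a, rfl⟩ : ∃ a, l = a + 1 := ⟨l - 1, by omega⟩
  obtain ⟨d, rfl⟩ : ∃ d, n = 2*j + d + 1 := ⟨n - 2*j - 1, by omega⟩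
  set C1 := Nat.choose (2*j + d + 2) (j + 1) with hC1
  set C2 := Nat.choose (a + 2*j + d + 2) a with hC2
  set A := Nat.choose (a + 2*j + d + 2) (j + d + 1) * Nat.choose (a + j) j with hA
  set B := Nat.choose (a + 2*j + d + 2) j * Nat.choose (a + j + d + 1) (j + d + 1) with hB
  have hI : (a + j + 1) * A = (j + 1) * (C1 * C2) := keyA a j d
  have hII : (a + j + d + 2) * B = (j + 1) * (C1 * C2) := keyB a j d
  have hBpos : 0 < B := by
    apply Nat.mul_pos
    · exact Nat.choose_pos (by omega)
    · exact Nat.choose_pos (by omega)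
  have hBA : B < A := by
    have h1 : (a + j + 1) * B < (a + j + d + 2) * B :=
      Nat.mul_lt_mul_of_lt_of_le (by omega) le_rfl hBpos
    have h2 : (a + j + 1) * B < (a + j + 1) * A := by rw [hI, ← hII]; exact h1
    exact Nat.lt_of_mul_lt_mul_left h2
  obtain ⟨c, hc⟩ : ∃ c, A = B + c ∧ 0 < c := ⟨A - B, by omega, by omega⟩
  refine ⟨2 ^ ((2*j + d + 1) / 2) * c, Nat.mul_pos (by positivity) hc.2, ?_⟩
  have hkey : (a + j + 1) * ((a + j + d + 2) * c) = C1 * C2 * ((d + 1) * (j + 1)) := by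
    have hI' : ((a : ℤ) + j + 1) * (B + c) = (j + 1) * (C1 * C2) := by
      exact_mod_cast hc.1 ▸ hI
    have hII' : ((a : ℤ) + j + d + 2) * B = (j + 1) * (C1 * C2) := by exact_mod_cast hII
    have : ((a : ℤ) + j + 1) * (((a : ℤ) + j + d + 2) * c)
        = (C1 : ℤ) * C2 * ((d + 1) * (j + 1)) := by
      linear_combination ((a : ℤ) + j + d + 2) * hI' - ((a : ℤ) + j + 1) * hII'
    exact_mod_cast this
  have s1 : 2*j + d + 1 + 1 = 2*j + d + 2 := by omega
  have s2 : a + 1 + (2*j + d + 1) = a + 2*j + d + 2 := by omega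
  have s3 : a + 1 - 1 = a := by omega
  have s4 : 2*j + d + 1 - 2*j = d + 1 := by omega
  have s5 : a + 1 + j = a + j + 1 := by omega
  have s6 : a + 2*j + d + 2 - j = a + j + d + 2 := by omega
  rw [s2, s3, s4, s5, s6, ← hC2]
  calc 2 ^ ((2*j + d + 1) / 2) * C1 * C2 * ((d + 1) * (j + 1))
      = 2 ^ ((2*j + d + 1) / 2) * (C1 * C2 * ((d + 1) * (j + 1))) := by ring
    _ = 2 ^ ((2*j + d + 1) / 2) * ((a + j + 1) * ((a + j + d + 2) * c)) := by rw [hkey]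
    _ = (a + j + 1) * (a + j + d + 2) * (2 ^ ((2*j + d + 1) / 2) * c) := by ring
end

section
/- For integers n ≥ 3, 0 < j < n/2 and l ≥ 1, the expression 2^⌊n/2⌋ · C(n+1, j) · C(l+n, l-1) · (n-2j+2)·j / ((l+j-1)(l+n-j+1)) is a positive integer. -/
open Nat

private lemma ch_cast (x y : ℕ) :
    (((x + y).choose x : ℕ) : ℚ) = (x + y)! / (x ! * y !) := by
  rw [Nat.cast_choose ℚ (Nat.le_add_right x y), Nat.add_sub_cancel_left]

/-- Identity (I): `(a+b+c+4) * C(a+2b+c+4, b) * C(a+b+c+3, a)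
      = (b+1) * C(2b+c+4, b+1) * C(a+2b+c+4, a)`. -/
private lemma idI (a b c : ℕ) :
    (a + b + c + 4) * ((b + (a + b + c + 4)).choose b * (a + (b + c + 3)).choose a)
      = (b + 1) * ((b + 1) + (b + c + 3)).choose (b + 1) * (a + (2 * b + c + 4)).choose a := by
  apply Nat.cast_injective (R := ℚ)
  push_cast [ch_cast]
  rw [show b + (a + b + c + 4) = a + (2 * b + c + 4) by ring,
      show a + (b + c + 3) = (a + b + c + 2) + 1 by ring,
      show a + b + c + 4 = ((a + b + c + 2) + 1) + 1 by ring,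
      show (b + 1) + (b + c + 3) = 2 * b + c + 4 by ring]
  rw [Nat.factorial_succ ((a + b + c + 2) + 1), Nat.factorial_succ b]
  push_cast
  have f1 : ∀ x : ℕ, ((x ! : ℕ) : ℚ) ≠ 0 := fun x => Nat.cast_ne_zero.mpr (Nat.factorial_ne_zero _)
  field_simp
  ring

/-- Identity (II): `(a+b+1) * C(a+2b+c+4, b+c+3) * C(a+b, a)
      = (b+1) * C(2b+c+4, b+1) * C(a+2b+c+4, a)`. -/
private lemma idII (a b c : ℕ) :
    (a + b + 1) * (((b + c + 3) + (a + b + 1)).choose (b + c + 3) * (a + b).choose a)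
      = (b + 1) * ((b + 1) + (b + c + 3)).choose (b + 1) * (a + (2 * b + c + 4)).choose a := by
  apply Nat.cast_injective (R := ℚ)
  push_cast [ch_cast]
  rw [show (b + c + 3) + (a + b + 1) = a + (2 * b + c + 4) by ring,
      show a + b + 1 = (a + b) + 1 by ring,
      show (b + 1) + (b + c + 3) = 2 * b + c + 4 by ring]
  rw [Nat.factorial_succ (a + b), Nat.factorial_succ b]
  push_cast
  field_simp

/-- The multiplicity `2^⌊n/2⌋ * C(n+1, j) * C(l+n, l-1) * (n-2j+2)·j / ((l+j-1)(l+n-j+1))`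
of the second eigenvalue family of the higher spin Dirac operator is a positive integer. -/
theorem stmt_2 (n j l : ℕ) (hn : 3 ≤ n) (hj : 0 < j) (hjn : 2 * j < n) (hl : 1 ≤ l) :
    ∃ m : ℕ, 0 < m ∧
      2 ^ (n / 2) * Nat.choose (n + 1) j * Nat.choose (l + n) (l - 1)
          * ((n - 2 * j + 2) * j)
        = (l + j - 1) * (l + n - j + 1) * m := by
  obtain ⟨a, rfl⟩ : ∃ a, l = a + 1 := ⟨l - 1, by omega⟩
  obtain ⟨b, rfl⟩ : ∃ b, j = b + 1 := ⟨j - 1, by omega⟩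
  obtain ⟨c, rfl⟩ : ∃ c, n = 2 * b + c + 3 := ⟨n - 2 * b - 3, by omega⟩
  set A : ℕ := (b + (a + b + c + 4)).choose b * (a + (b + c + 3)).choose a with hA
  set B : ℕ := ((b + c + 3) + (a + b + 1)).choose (b + c + 3) * (a + b).choose a with hB
  have hI := idI a b c
  have hII := idII a b c
  have hApos : 0 < A := Nat.mul_pos (Nat.choose_pos (by omega)) (Nat.choose_pos (by omega))
  have hTeq : (a + b + 1) * B = (a + b + c + 4) * A := hII.trans hI.symm
  have hAB : A < B := by nlinarith
  refine ⟨2 ^ ((2 * b + c + 3) / 2) * (B - A), by have := Nat.sub_pos_of_lt hAB; positivity, ?_⟩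
  rw [show 2 * b + c + 3 + 1 = (b + 1) + (b + c + 3) by ring,
      show a + 1 + (2 * b + c + 3) = a + (2 * b + c + 4) by ring,
      show a + 1 - 1 = a by omega,
      show 2 * b + c + 3 - 2 * (b + 1) + 2 = c + 3 by omega,
      show a + 1 + (b + 1) - 1 = a + b + 1 by omega,
      show a + (2 * b + c + 4) - (b + 1) + 1 = a + b + c + 4 by omega]
  zify [hAB.le]
  have hI' : ((a : ℤ) + b + c + 4) * A = (b + 1) * ((b + 1) + (b + c + 3)).choose (b + 1) * (a + (2 * b + c + 4)).choose a := by
    exact_mod_cast congrArg (Nat.cast : ℕ → ℤ) hI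
  have hII' : ((a : ℤ) + b + 1) * B = (b + 1) * ((b + 1) + (b + c + 3)).choose (b + 1) * (a + (2 * b + c + 4)).choose a := by
    exact_mod_cast congrArg (Nat.cast : ℕ → ℤ) hII
  linear_combination (2 ^ ((2 * b + c + 3) / 2) : ℤ) *
    (((a : ℤ) + b + 1) * hI' - ((a : ℤ) + b + c + 4) * hII')
end
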